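/- arXiv:2302.01383 — 10 statements merged into one kernel-verified Lean document; each statement's English description precedes it below -/
import Mathlib

section
/- Let X = [a,b]_ℤ (with a ≤ b) with c₁-adjacency and let A = {a,b}, m ∈ ℕ. Then (X,c₁) is (A,m,m)-limited; moreover A is a minimal (m,m)-limiting set for (X,c₁) if and only if b − a > m. -/
/-- A function between digital images (graphs) is digitally continuous if adjacent
points map to equal or adjacent points. -/
def DigContinuous {V W : Type*} (G : SimpleGraph V) (H : SimpleGraph W) (f : V → W) : Prop :=
  ∀ x y : V, G.Adj x y → f x = f y ∨ H.Adj (f x) (f y)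

/-- `f` restricted to `A` is an `m`-map: it moves each point of `A` a graph distance of at
most `m`. -/
def IsMMapOn {V : Type*} (G : SimpleGraph V) (f : V → V) (A : Set V) (m : ℕ) : Prop :=
  ∀ a ∈ A, G.dist a (f a) ≤ m

/-- `A` is an `(m,n)`-limiting set for `(X,κ)`: every continuous self-map whose restriction
to `A` is an `m`-map is an `n`-map. -/
def IsLimiting {V : Type*} (G : SimpleGraph V) (A : Set V) (m n : ℕ) : Prop :=
  ∀ f : V → V, DigContinuous G G f → IsMMapOn G f A m → IsMMapOn G f Set.univ n

/-- `A` is a minimal `(m,n)`-limiting set: it is limiting and no proper subset is. -/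
def IsMinimalLimiting {V : Type*} (G : SimpleGraph V) (A : Set V) (m n : ℕ) : Prop :=
  IsLimiting G A m n ∧ ∀ B : Set V, B ⊂ A → ¬ IsLimiting G B m n

/-- The digital interval `[a,b]_ℤ` with `c₁`-adjacency. -/
def intC1Icc (a b : ℤ) : SimpleGraph (Set.Icc a b) where
  Adj x y := |(x : ℤ) - (y : ℤ)| = 1
  symm := by
    constructor
    intro x y h
    rwa [abs_sub_comm]
  loopless := by
    constructor
    intro x h
    simp at h

/-!
A digitally continuous map does not increase graph distance, and on `[a,b]_ℤ` the graph
distance is `|x - y|`; hence `f(y) - f(x) ≤ y - x` for `x ≤ y`, i.e. the displacement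
`x ↦ f(x) - x` is antitone. Its values on `[a,b]` are therefore squeezed between those at
`b` and at `a`, which gives the limiting property. When `b - a ≤ m` every self-map is an
`m`-map, so already `∅` is limiting; when `b - a > m`, a subset missing one endpoint is
defeated by the constant map to the other endpoint.
-/

lemma Set.subset_singleton_or_of_ssubset_pair {α : Type*} {s : Set α} {x y : α}
    (h : s ⊂ {x, y}) : s ⊆ {x} ∨ s ⊆ {y} := by
  rcases Set.subset_pair_iff_eq.mp h.subset with rfl | rfl | rfl | rfl
  · exact .inl (Set.empty_subset _)
  · exact .inl le_rfl
  · exact .inr le_rfl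
  · exact absurd rfl h.ne

section Limiting

variable {V W : Type*} {G : SimpleGraph V} {H : SimpleGraph W}

lemma DigContinuous.exists_walk_length_le {f : V → W} (hf : DigContinuous G H f) {x y : V}
    (p : G.Walk x y) : ∃ q : H.Walk (f x) (f y), q.length ≤ p.length := by
  induction p with
  | nil => exact ⟨.nil, le_rfl⟩
  | cons hadj _ ih =>
    obtain ⟨q, hq⟩ := ih
    rcases hf _ _ hadj with heq | hadj'
    · exact ⟨q.copy heq.symm rfl, by simp only [SimpleGraph.Walk.length_copy,
        SimpleGraph.Walk.length_cons]; omega⟩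
    · exact ⟨.cons hadj' q, by simpa using hq⟩

lemma DigContinuous.dist_le {f : V → W} (hf : DigContinuous G H f) {x y : V}
    (hxy : G.Reachable x y) : H.dist (f x) (f y) ≤ G.dist x y := by
  obtain ⟨p, hp⟩ := hxy.exists_walk_length_eq_dist
  obtain ⟨q, hq⟩ := hf.exists_walk_length_le p
  exact (SimpleGraph.dist_le q).trans (hp ▸ hq)

lemma digContinuous_const (c : V) : DigContinuous G G fun _ => c :=
  fun _ _ _ => Or.inl rfl

variable {A B : Set V} {m n : ℕ}

lemma IsLimiting.mono (hAB : A ⊆ B) (hA : IsLimiting G A m n) : IsLimiting G B m n :=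
  fun f hf hB => hA f hf fun a ha => hB a (hAB ha)

lemma isLimiting_of_forall_dist_le (h : ∀ x y : V, G.dist x y ≤ n) : IsLimiting G A m n :=
  fun f _ _ x _ => h x (f x)

lemma not_isLimiting_singleton {c x : V} (hx : n < G.dist x c) : ¬ IsLimiting G {c} m n := by
  intro hc
  have hconst := hc (fun _ => c) (digContinuous_const c) (by simp [IsMMapOn])
  exact (hconst x trivial).not_gt hx

end Limiting

section Interval

variable {a b : ℤ}

lemma intC1Icc_adj {x y : Set.Icc a b} :
    (intC1Icc a b).Adj x y ↔ |(x : ℤ) - (y : ℤ)| = 1 := Iff.rfl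

lemma intC1Icc_exists_walk (x y : Set.Icc a b) :
    ∃ p : (intC1Icc a b).Walk x y, p.length = ((x : ℤ) - y).natAbs := by
  induction h : ((x : ℤ) - y).natAbs generalizing x with
  | zero => exact ⟨.copy .nil rfl (Subtype.ext (by omega)), by simp⟩
  | succ n ih =>
    obtain ⟨⟨hax, hxb⟩, ⟨hay, hyb⟩⟩ := And.intro x.2 y.2
    obtain ⟨z, hxz, hzy⟩ : ∃ z : Set.Icc a b,
        (intC1Icc a b).Adj x z ∧ ((z : ℤ) - y).natAbs = n := by
      rcases lt_or_gt_of_ne (show (x : ℤ) ≠ y by omega) with hlt | hgt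
      · exact ⟨⟨x + 1, by omega, by omega⟩, by simp [intC1Icc_adj], by simp only; omega⟩
      · exact ⟨⟨x - 1, by omega, by omega⟩, by simp [intC1Icc_adj], by simp only; omega⟩
    obtain ⟨p, hp⟩ := ih z hzy
    exact ⟨.cons hxz p, by simp [hp]⟩

lemma intC1Icc_preconnected : (intC1Icc a b).Preconnected := fun x y =>
  (intC1Icc_exists_walk x y).elim fun p _ => ⟨p⟩

lemma intC1Icc_natAbs_sub_le_length {x y : Set.Icc a b} (p : (intC1Icc a b).Walk x y) :
    ((x : ℤ) - y).natAbs ≤ p.length := by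
  induction p with
  | nil => simp
  | cons hadj _ ih =>
    have := abs_le.mp (intC1Icc_adj.mp hadj).le
    simp only [SimpleGraph.Walk.length_cons]
    omega

lemma intC1Icc_dist (x y : Set.Icc a b) :
    (intC1Icc a b).dist x y = ((x : ℤ) - y).natAbs := by
  obtain ⟨p, hp⟩ := intC1Icc_exists_walk x y
  obtain ⟨q, hq⟩ := (intC1Icc_preconnected x y).exists_walk_length_eq_dist
  have := intC1Icc_natAbs_sub_le_length q
  have := SimpleGraph.dist_le p
  omega

lemma DigContinuous.intC1Icc_sub_le_sub {f : Set.Icc a b → Set.Icc a b}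
    (hf : DigContinuous (intC1Icc a b) (intC1Icc a b) f) {x y : Set.Icc a b}
    (hxy : (x : ℤ) ≤ y) : (f y : ℤ) - y ≤ (f x : ℤ) - x := by
  have := hf.dist_le (intC1Icc_preconnected x y)
  rw [intC1Icc_dist, intC1Icc_dist] at this
  omega

lemma isLimiting_intC1Icc_endpoints (m : ℕ) :
    IsLimiting (intC1Icc a b) {x : Set.Icc a b | (x : ℤ) = a ∨ (x : ℤ) = b} m m := by
  intro f hf hA x _
  have hab : a ≤ b := x.2.1.trans x.2.2
  let xa : Set.Icc a b := ⟨a, le_rfl, hab⟩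
  let xb : Set.Icc a b := ⟨b, hab, le_rfl⟩
  have hfa := hA xa (Or.inl rfl)
  have hfb := hA xb (Or.inr rfl)
  have hleft := hf.intC1Icc_sub_le_sub (show (xa : ℤ) ≤ x from x.2.1)
  have hright := hf.intC1Icc_sub_le_sub (show (x : ℤ) ≤ xb from x.2.2)
  rw [intC1Icc_dist] at hfa hfb ⊢
  omega

end Interval

theorem stmt0 (a b : ℤ) (hab : a ≤ b) (m : ℕ) :
    IsLimiting (intC1Icc a b) {x : Set.Icc a b | (x : ℤ) = a ∨ (x : ℤ) = b} m m ∧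
    (IsMinimalLimiting (intC1Icc a b) {x : Set.Icc a b | (x : ℤ) = a ∨ (x : ℤ) = b} m m ↔
      (m : ℤ) < b - a) := by
  have hlim := isLimiting_intC1Icc_endpoints (a := a) (b := b) m
  refine ⟨hlim, ?_⟩
  let xa : Set.Icc a b := ⟨a, le_rfl, hab⟩
  let xb : Set.Icc a b := ⟨b, hab, le_rfl⟩
  have hdist : (intC1Icc a b).dist xa xb = (b - a).natAbs := by
    rw [intC1Icc_dist, ← Int.natAbs_neg, neg_sub]
  have hA : {x : Set.Icc a b | (x : ℤ) = a ∨ (x : ℤ) = b} = {xa, xb} := by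
    ext; simp [Subtype.ext_iff, xa, xb]
  rw [hA] at hlim ⊢
  refine ⟨fun ⟨_, hmin⟩ => ?_, fun hm => ⟨hlim, fun B hB hBlim => ?_⟩⟩
  · by_contra! hba
    refine hmin ∅ (Set.empty_ssubset.mpr ⟨xa, .inl rfl⟩) (isLimiting_of_forall_dist_le ?_)
    intro x y
    obtain ⟨⟨hax, hxb⟩, ⟨hay, hyb⟩⟩ := And.intro x.2 y.2
    rw [intC1Icc_dist]
    omega
  · rcases Set.subset_singleton_or_of_ssubset_pair hB with hBa | hBb
    · refine not_isLimiting_singleton (x := xb) ?_ (hBlim.mono hBa)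
      rw [SimpleGraph.dist_comm, hdist]
      omega
    · refine not_isLimiting_singleton (x := xa) ?_ (hBlim.mono hBb)
      rw [hdist]
      omega
end

section
/- Let (X,κ) be a connected digital image, let A be a nonempty subset of X, and let k ∈ ℕ. Suppose for every x ∈ X there exists a_x ∈ A such that d_{(X,κ)}(x,a_x) ≤ k. If f ∈ C(X,κ) and f|_A is an m-map, then f is an (m+2k)-map. -/
lemma dig_nonexpansive {V : Type*} (G : SimpleGraph V) (hG : G.Connected)
    (f : V → V) (hf : DigContinuous G G f) (x y : V) :
    G.dist (f x) (f y) ≤ G.dist x y := by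
  obtain ⟨p, hp⟩ := hG.exists_walk_length_eq_dist x y
  rw [← hp]
  clear hp
  induction p with
  | nil => simp
  | cons h q ih =>
    rename_i u v w
    rcases hf u v h with he | ha
    · simpa [he, SimpleGraph.Walk.length_cons] using ih.trans (Nat.le_succ _)
    · calc G.dist (f u) (f w) ≤ G.dist (f u) (f v) + G.dist (f v) (f w) :=
            hG.dist_triangle
        _ ≤ 1 + q.length :=
            Nat.add_le_add (le_of_eq (SimpleGraph.dist_eq_one_iff_adj.2 ha)) ih
        _ = (SimpleGraph.Walk.cons h q).length := by
            simp [SimpleGraph.Walk.length_cons, Nat.add_comm]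

theorem stmt3 {V : Type*} (G : SimpleGraph V) (hG : G.Connected)
    (A : Set V) (hA : A.Nonempty) (k m : ℕ)
    (hk : ∀ x : V, ∃ a ∈ A, G.dist x a ≤ k)
    (f : V → V) (hf : DigContinuous G G f) (hfA : IsMMapOn G f A m) :
    IsMMapOn G f Set.univ (m + 2 * k) := by
  intro x _
  obtain ⟨a, haA, hxa⟩ := hk x
  calc G.dist x (f x) ≤ G.dist x a + G.dist a (f x) := hG.dist_triangle
    _ ≤ G.dist x a + (G.dist a (f a) + G.dist (f a) (f x)) :=
        Nat.add_le_add_left hG.dist_triangle _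
    _ ≤ k + (m + k) := by
        refine Nat.add_le_add hxa (Nat.add_le_add (hfA a haA) ?_)
        exact (dig_nonexpansive G hG f hf a x).trans
          (by rwa [SimpleGraph.dist_comm])
    _ = m + 2 * k := by ring
end

section
/- Let A be a dominating set for a connected digital image (X,κ), i.e., for every x ∈ X there exists a ∈ A with x = a or x κ-adjacent to a. If f ∈ C(X,κ) and f|_A is an m-map, then f is an (m+2)-map; consequently (X,κ) is (A,m,m+2)-limited. -/
theorem stmt4 {V : Type*} (G : SimpleGraph V) (hG : G.Connected)
    (A : Set V) (hdom : ∀ x : V, ∃ a ∈ A, x = a ∨ G.Adj x a) (m : ℕ) :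
    (∀ f : V → V, DigContinuous G G f → IsMMapOn G f A m →
      IsMMapOn G f Set.univ (m + 2)) ∧
    IsLimiting G A m (m + 2) := by
  have key : ∀ f : V → V, DigContinuous G G f → IsMMapOn G f A m →
      IsMMapOn G f Set.univ (m + 2) := by
    intro f hcont hm x _
    obtain ⟨a, ha, hxa⟩ := hdom x
    have h1 : G.dist x a ≤ 1 := by
      rcases hxa with h | h
      · simp [h, SimpleGraph.dist_self]
      · exact le_of_eq ((G.dist_eq_one_iff_adj).2 h)
    have h2 : G.dist (f a) (f x) ≤ 1 := by
      rcases hxa with h | h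
      · simp [h, SimpleGraph.dist_self]
      · rcases hcont x a h with he | hadj
        · simp [he, SimpleGraph.dist_self]
        · rw [SimpleGraph.dist_comm]; exact le_of_eq ((G.dist_eq_one_iff_adj).2 hadj)
    calc G.dist x (f x) ≤ G.dist x a + G.dist a (f x) := hG.dist_triangle
      _ ≤ G.dist x a + (G.dist a (f a) + G.dist (f a) (f x)) := by
          exact Nat.add_le_add_left hG.dist_triangle _
      _ ≤ 1 + (m + 1) := by
          have := hm a ha
          omega
      _ = m + 2 := by omega
  exact ⟨key, key⟩
end

section
/- Let (X,κ) be a finite connected digital image with diameter diam(X,κ) = max{d_{(X,κ)}(x,y) : x,y ∈ X}, and let f ∈ C(X,κ) be an m-map. Then diam(f(X)) ≥ diam(X,κ) − 2m, where the diameter of f(X) may be computed either with the metric d_{(X,κ)} restricted to f(X) or with the shortest path metric d_{(f(X),κ)} of the induced subgraph on f(X). -/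
/-- The diameter of a subset `S` of a digital image, computed using the metric of the
ambient image restricted to `S`. -/
noncomputable def subDiam {V : Type*} (G : SimpleGraph V) (S : Set V) : ℕ :=
  sSup {d : ℕ | ∃ x ∈ S, ∃ y ∈ S, G.dist x y = d}

lemma aux_reach {V : Type*} (G : SimpleGraph V) (f : V → V)
    (hf : ∀ x y : V, G.Adj x y → f x = f y ∨ G.Adj (f x) (f y))
    {x y : V} (p : G.Walk x y) :
    (G.induce (Set.range f)).Reachable ⟨f x, x, rfl⟩ ⟨f y, y, rfl⟩ := by
  induction p with
  | nil => exact SimpleGraph.Reachable.refl _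
  | @cons a b c h p ih =>
    refine SimpleGraph.Reachable.trans ?_ ih
    rcases hf a b h with he | ha
    · rw [show (⟨f a, a, rfl⟩ : (Set.range f)) = ⟨f b, b, rfl⟩ from Subtype.ext he]
    · exact SimpleGraph.Adj.reachable ha

theorem stmt6 {V : Type*} [Fintype V] (G : SimpleGraph V) (hG : G.Connected)
    (m : ℕ) (f : V → V) (hf : DigContinuous G G f)
    (hm : ∀ x : V, G.dist x (f x) ≤ m) :
    subDiam G Set.univ - 2 * m ≤ subDiam G (Set.range f) ∧
    subDiam G Set.univ - 2 * m ≤ (G.induce (Set.range f)).diam := by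
  have hne : Nonempty V := hG.nonempty
  set D : Set ℕ := {d : ℕ | ∃ x ∈ (Set.univ : Set V), ∃ y ∈ (Set.univ : Set V), G.dist x y = d}
  have hDfin : D.Finite := by
    have : D ⊆ Set.range (fun p : V × V => G.dist p.1 p.2) := by
      rintro d ⟨x, -, y, -, rfl⟩; exact ⟨(x, y), rfl⟩
    exact (Set.finite_range _).subset this
  have hDne : D.Nonempty := ⟨0, Classical.arbitrary V, trivial, Classical.arbitrary V, trivial,
    SimpleGraph.dist_self⟩
  obtain ⟨x, -, y, -, hxy⟩ : subDiam G Set.univ ∈ D := by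
    rw [subDiam]
    exact Nat.sSup_mem hDne hDfin.bddAbove
  have key : subDiam G Set.univ - 2 * m ≤ G.dist (f x) (f y) := by
    have h1 : G.dist x y ≤ G.dist x (f x) + G.dist (f x) (f y) + G.dist (f y) y :=
      le_trans (hG.dist_triangle (v := f x))
        (by have := hG.dist_triangle (u := f x) (v := f y) (w := y); omega)
    have h2 : G.dist (f y) y ≤ m := by rw [SimpleGraph.dist_comm]; exact hm y
    have := hm x
    omega
  constructor
  · refine le_trans key (le_csSup ?_ ⟨f x, ⟨x, rfl⟩, f y, ⟨y, rfl⟩, rfl⟩)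
    have : {d : ℕ | ∃ a ∈ Set.range f, ∃ b ∈ Set.range f, G.dist a b = d} ⊆ D := by
      rintro d ⟨a, -, b, -, rfl⟩; exact ⟨a, trivial, b, trivial, rfl⟩
    exact (hDfin.subset this).bddAbove
  · have hconn : (G.induce (Set.range f)).Connected := by
      rw [SimpleGraph.connected_iff]
      refine ⟨?_, ⟨⟨f x, x, rfl⟩⟩⟩
      rintro ⟨a, u, rfl⟩ ⟨b, v, rfl⟩
      exact aux_reach G f hf (hG.preconnected u v).some
    have hne_top : (G.induce (Set.range f)).ediam ≠ ⊤ := by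
      obtain ⟨u, v, huv⟩ := SimpleGraph.exists_edist_eq_ediam_of_finite
        (G := G.induce (Set.range f))
      rw [← huv, SimpleGraph.edist_ne_top_iff_reachable]
      exact hconn.preconnected u v
    refine le_trans key ?_
    refine le_trans ?_ (SimpleGraph.dist_le_diam hne_top
      (u := ⟨f x, x, rfl⟩) (v := ⟨f y, y, rfl⟩))
    obtain ⟨p, hp⟩ := (hconn.preconnected ⟨f x, x, rfl⟩ ⟨f y, y, rfl⟩).exists_walk_length_eq_dist
    have : G.dist (f x) (f y) ≤ (p.map ⟨Subtype.val, fun h => h⟩).length :=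
      SimpleGraph.dist_le _
    rwa [SimpleGraph.Walk.length_map, hp] at this
end

section
/- Let (X,κ) be a connected digital image that is rigid. Then the only 1-map in C(X,κ) is the identity map id_X. -/
/-- Digital homotopy between two continuous self-maps of a digital image. -/
def DigHomotopic {V : Type*} (G : SimpleGraph V) (f g : V → V) : Prop :=
  ∃ (k : ℕ) (h : V → ℕ → V),
    (∀ x, h x 0 = f x) ∧ (∀ x, h x k = g x) ∧
    (∀ x, ∀ t < k, h x t = h x (t + 1) ∨ G.Adj (h x t) (h x (t + 1))) ∧
    (∀ t ≤ k, DigContinuous G G (fun x => h x t))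

/-- A digital image is rigid if the only continuous self-map homotopic to the identity
is the identity. -/
def Rigid {V : Type*} (G : SimpleGraph V) : Prop :=
  ∀ f : V → V, DigContinuous G G f → DigHomotopic G id f → f = id

theorem stmt8 {V : Type*} (G : SimpleGraph V) (hG : G.Connected) (hrig : Rigid G)
    (f : V → V) (hf : DigContinuous G G f) (h1 : ∀ x : V, G.dist x (f x) ≤ 1) :
    f = id := by
  apply hrig f hf
  refine ⟨1, fun x t => if t = 0 then x else f x, by simp, by simp, ?_, ?_⟩
  · intro x t ht
    interval_cases t
    simp only [if_pos rfl, if_neg one_ne_zero]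
    have := h1 x
    interval_cases h : G.dist x (f x)
    · left; exact (hG x (f x)).dist_eq_zero_iff.mp h
    · right; exact SimpleGraph.dist_eq_one_iff_adj.mp h
  · intro t ht
    by_cases h0 : t = 0
    · simp only [h0, if_pos rfl]; intro x y hxy; right; exact hxy
    · simp only [if_neg h0]; exact hf
end

section
/- Let C_v be a digital simple closed curve with v even, v ≥ 4, and let f ∈ C(C_v,κ) be non-surjective. Then there is an index j such that 4·d_{(C_v,κ)}(x_j, f(x_j)) ≥ v − 2; in particular, f is not a D(v)-map. -/
/-- The digital simple closed curve (cycle) on `v` points, with vertex `x_i` modeled as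
`(i : ZMod v)`: `x_i` and `x_j` are adjacent iff `i ≡ j ± 1 (mod v)` (and `i ≠ j`). -/
def cycG (v : ℕ) : SimpleGraph (ZMod v) where
  Adj i j := i ≠ j ∧ (i = j + 1 ∨ j = i + 1)
  symm := by
    constructor
    rintro i j ⟨hne, h⟩
    exact ⟨hne.symm, h.symm⟩
  loopless := by
    constructor
    rintro i ⟨hne, -⟩
    exact hne rfl

/-- `D(v) = (v-2)/4 - 1` if `4 ∣ v-2`, else `⌊(v-2)/4⌋`. -/
def Dv (v : ℕ) : ℕ := if (v - 2) % 4 = 0 then (v - 2) / 4 - 1 else (v - 2) / 4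

/-
Proof idea: a point `p` missed by `f` cuts the cycle open into a path, on which `f x - p` has
an integer lift. Hence the displacement `f x - x` lifts to an integer function along
`x = p, p + 1, …, p + (v - 1)` which starts in `(0, v)`, drops by at most `2` per step, and ends
at least `v - 2` lower, because `p + (v - 1)` is adjacent to `p`. It therefore passes within `1`
of `v / 2` or of `-(v / 2)`, where the displacement has length at least `v / 2 - 1` on the cycle,
and `4 (v / 2 - 1) ≥ v - 2` once `v ≥ 4`.
-/

theorem Int.exists_mem_Icc_of_le_succ_add_two {g : ℕ → ℤ} (hg : ∀ k, g k ≤ g (k + 1) + 2)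
    {n : ℕ} {T : ℤ} (h0 : T ≤ g 0) (hn : g n ≤ T + 1) :
    ∃ k, g k ∈ Set.Icc T (T + 1) := by
  induction n with
  | zero => exact ⟨0, h0, hn⟩
  | succ n ih =>
    by_cases h : g n ≤ T + 1
    · exact ih h
    · exact ⟨n + 1, by have := hg n; omega, hn⟩

theorem ZMod.natAbs_valMinAbs_intCast {v : ℕ} {z : ℤ} (hz : z.natAbs ≤ v / 2) :
    (z : ZMod v).valMinAbs.natAbs = z.natAbs := by
  obtain ⟨n, rfl | rfl⟩ := Int.eq_nat_or_neg z
  · simp [ZMod.valMinAbs_natCast_of_le_half (by simpa using hz)]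
  · rw [Int.cast_neg, ZMod.natAbs_valMinAbs_neg]
    simp [ZMod.valMinAbs_natCast_of_le_half (by simpa using hz)]

theorem ZMod.natAbs_valMinAbs_one_le (v : ℕ) [NeZero v] :
    (1 : ZMod v).valMinAbs.natAbs ≤ 1 := by
  rw [ZMod.valMinAbs_natAbs_eq_min]
  exact (min_le_left _ _).trans ((ZMod.val_one_eq_one_mod v).trans_le (Nat.mod_le 1 v))

theorem ZMod.val_add_one_of_ne_zero {v : ℕ} [Fact (1 < v)] {a : ZMod v}
    (h : a + 1 ≠ 0) : (a + 1).val = a.val + 1 := by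
  have hne : (a + 1).val ≠ 0 := (ZMod.val_ne_zero _).mpr h
  rw [ZMod.val_add, ZMod.val_one] at hne ⊢
  rcases (Nat.succ_le_of_lt a.val_lt).lt_or_eq with hlt | heq
  · exact Nat.mod_eq_of_lt hlt
  · rw [← Nat.succ_eq_add_one, heq, Nat.mod_self] at hne
    exact absurd rfl hne

open SimpleGraph

namespace cycG

variable {v : ℕ}

theorem adj_add_one [Fact (1 < v)] (x : ZMod v) : (cycG v).Adj x (x + 1) :=
  ⟨fun h => one_ne_zero (left_eq_add.mp h), Or.inr rfl⟩

theorem adj_sub_right {x y : ZMod v} (p : ZMod v) (h : (cycG v).Adj x y) :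
    (cycG v).Adj (x - p) (y - p) := by
  obtain ⟨hne, h | h⟩ := h
  · exact ⟨sub_left_injective.ne hne, Or.inl (by rw [h]; ring)⟩
  · exact ⟨sub_left_injective.ne hne, Or.inr (by rw [h]; ring)⟩

theorem preconnected [Fact (1 < v)] : (cycG v).Preconnected := by
  have hreach (x : ZMod v) (n : ℕ) : (cycG v).Reachable x (x + n) := by
    induction n with
    | zero => simp
    | succ n ih =>
      rw [Nat.cast_succ, ← add_assoc]
      exact ih.trans (adj_add_one _).reachable
  intro x y
  simpa using hreach x (y - x).val

theorem natAbs_valMinAbs_sub_le_length [NeZero v] {x y : ZMod v} (w : (cycG v).Walk x y) :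
    (y - x).valMinAbs.natAbs ≤ w.length := by
  induction w with
  | nil => simp
  | @cons x c y h w ih =>
    have hstep : (c - x).valMinAbs.natAbs ≤ 1 := by
      obtain ⟨-, h | h⟩ := h
      · rw [h, sub_add_cancel_left, ZMod.natAbs_valMinAbs_neg]
        exact ZMod.natAbs_valMinAbs_one_le v
      · rw [h, add_sub_cancel_left]
        exact ZMod.natAbs_valMinAbs_one_le v
    calc (y - x).valMinAbs.natAbs
        = ((y - c) + (c - x)).valMinAbs.natAbs := by rw [sub_add_sub_cancel]
      _ ≤ ((y - c).valMinAbs + (c - x).valMinAbs).natAbs := ZMod.natAbs_valMinAbs_add_le _ _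
      _ ≤ (y - c).valMinAbs.natAbs + (c - x).valMinAbs.natAbs := Int.natAbs_add_le _ _
      _ ≤ (Walk.cons h w).length := by rw [SimpleGraph.Walk.length_cons]; omega

theorem natAbs_valMinAbs_sub_le_dist [Fact (1 < v)] (x y : ZMod v) :
    (y - x).valMinAbs.natAbs ≤ (cycG v).dist x y := by
  obtain ⟨w, hw⟩ := (preconnected x y).exists_walk_length_eq_dist
  exact hw ▸ natAbs_valMinAbs_sub_le_length w

theorem val_le_val_add_one_of_adj [Fact (1 < v)] {a b : ZMod v}
    (h : (cycG v).Adj a b) (hb : b ≠ 0) : a.val ≤ b.val + 1 := by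
  obtain ⟨-, rfl | rfl⟩ := h
  · exact (ZMod.val_add_le b 1).trans (by rw [ZMod.val_one])
  · rw [ZMod.val_add_one_of_ne_zero hb]
    omega

end cycG

section Displacement

variable {v : ℕ} {f : ZMod v → ZMod v} {p : ZMod v}

theorem DigContinuous.val_sub_le_of_adj [Fact (1 < v)]
    (hf : DigContinuous (cycG v) (cycG v) f) (hp : ∀ a, f a ≠ p) {x y : ZMod v}
    (h : (cycG v).Adj x y) :
    (f x - p).val ≤ (f y - p).val + 1 := by
  rcases hf x y h with hxy | hxy
  · rw [hxy]
    omega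
  · exact cycG.val_le_val_add_one_of_adj (cycG.adj_sub_right p hxy) (sub_ne_zero.mpr (hp y))

variable (f p) in
/-- Cutting the cycle open at `p`, the displacement `f x - x` at `x = p + k`, lifted to `ℤ`. -/
def liftDisplacement (k : ℕ) : ℤ := (f (p + (k : ZMod v)) - p).val - k

theorem liftDisplacement_cast [NeZero v] (k : ℕ) :
    (liftDisplacement f p k : ZMod v) = f (p + k) - (p + (k : ZMod v)) := by
  simp [liftDisplacement]
  ring

theorem liftDisplacement_le_succ_add_two [Fact (1 < v)]
    (hf : DigContinuous (cycG v) (cycG v) f) (hp : ∀ a, f a ≠ p) (k : ℕ) :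
    liftDisplacement f p k ≤ liftDisplacement f p (k + 1) + 2 := by
  have h := hf.val_sub_le_of_adj hp (cycG.adj_add_one (p + (k : ZMod v)))
  rw [add_assoc, ← Nat.cast_add_one] at h
  simp only [liftDisplacement]
  omega

theorem liftDisplacement_pred_le [Fact (1 < v)] (hf : DigContinuous (cycG v) (cycG v) f)
    (hp : ∀ a, f a ≠ p) : liftDisplacement f p (v - 1) + v ≤ liftDisplacement f p 0 + 2 := by
  have hv : 1 < v := Fact.out
  have hlast : p + ((v - 1 : ℕ) : ZMod v) + 1 = p + ((0 : ℕ) : ZMod v) := by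
    rw [add_assoc, ← Nat.cast_add_one, Nat.sub_add_cancel hv.le, ZMod.natCast_self, Nat.cast_zero]
  have h := hf.val_sub_le_of_adj hp (hlast ▸ cycG.adj_add_one (p + ((v - 1 : ℕ) : ZMod v)))
  simp only [liftDisplacement]
  omega

theorem liftDisplacement_zero_mem_Ioo [NeZero v] (hp : ∀ a, f a ≠ p) :
    liftDisplacement f p 0 ∈ Set.Ioo 0 (v : ℤ) := by
  have hpos := (ZMod.val_ne_zero _).mpr (sub_ne_zero.mpr (hp (p + (0 : ℕ))))
  have hlt := (f (p + (0 : ℕ)) - p).val_lt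
  simp only [liftDisplacement, Set.mem_Ioo]
  omega

end Displacement

theorem exists_half_sub_one_le_dist_of_not_surjective {v : ℕ} [Fact (1 < v)]
    {f : ZMod v → ZMod v} (hf : DigContinuous (cycG v) (cycG v) f)
    (hns : ¬ Function.Surjective f) : ∃ j : ZMod v, v / 2 - 1 ≤ (cycG v).dist j (f j) := by
  obtain ⟨p, hp⟩ : ∃ p, ∀ a, f a ≠ p := by simpa [Function.Surjective] using hns
  have hstep := liftDisplacement_le_succ_add_two hf hp
  have hlast := liftDisplacement_pred_le hf hp
  have hzero := liftDisplacement_zero_mem_Ioo hp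
  have hv : 1 < v := Fact.out
  -- The lift starts in `(0, v)` and falls by at least `v - 2` in steps of at most `2`,
  -- so it comes within `1` of `v / 2` or of `-(v / 2)`.
  obtain ⟨k, hk⟩ : ∃ k, v / 2 - 1 ≤ (liftDisplacement f p k).natAbs ∧
      (liftDisplacement f p k).natAbs ≤ v / 2 := by
    by_cases hhalf : ((v / 2 : ℕ) : ℤ) ≤ liftDisplacement f p 0
    · obtain ⟨k, hk⟩ := Int.exists_mem_Icc_of_le_succ_add_two hstep (n := v - 1)
        (T := (v / 2 : ℕ) - 1) (by omega) (by simp only [Set.mem_Ioo] at hzero; omega)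
      exact ⟨k, by simp only [Set.mem_Icc] at hk; omega⟩
    · obtain ⟨k, hk⟩ := Int.exists_mem_Icc_of_le_succ_add_two hstep (n := v - 1)
        (T := -(v / 2 : ℕ)) (by simp only [Set.mem_Ioo] at hzero; omega) (by omega)
      exact ⟨k, by simp only [Set.mem_Icc] at hk; omega⟩
  refine ⟨p + k, ?_⟩
  calc v / 2 - 1 ≤ (liftDisplacement f p k).natAbs := hk.1
    _ = (f (p + k) - (p + k)).valMinAbs.natAbs := by
      rw [← liftDisplacement_cast, ZMod.natAbs_valMinAbs_intCast hk.2]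
    _ ≤ (cycG v).dist (p + k) (f (p + k)) := cycG.natAbs_valMinAbs_sub_le_dist _ _

theorem stmt12_general (v : ℕ) (hv : 4 ≤ v)
    (f : ZMod v → ZMod v) (hf : DigContinuous (cycG v) (cycG v) f)
    (hns : ¬ Function.Surjective f) :
    (∃ j : ZMod v, v - 2 ≤ 4 * (cycG v).dist j (f j)) ∧
    ¬ (∀ x : ZMod v, (cycG v).dist x (f x) ≤ Dv v) := by
  have : Fact (1 < v) := ⟨by omega⟩
  obtain ⟨j, hj⟩ := exists_half_sub_one_le_dist_of_not_surjective hf hns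
  have hfar : v - 2 ≤ 4 * (cycG v).dist j (f j) := by omega
  refine ⟨⟨j, hfar⟩, fun hD => ?_⟩
  have hjD := hD j
  unfold Dv at hjD
  split at hjD <;> omega

theorem stmt12 (v : ℕ) (hv : 4 ≤ v) (hev : Even v)
    (f : ZMod v → ZMod v) (hf : DigContinuous (cycG v) (cycG v) f)
    (hns : ¬ Function.Surjective f) :
    (∃ j : ZMod v, v - 2 ≤ 4 * (cycG v).dist j (f j)) ∧
    ¬ (∀ x : ZMod v, (cycG v).dist x (f x) ≤ Dv v) :=
  stmt12_general v hv f hf hns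
end

section
/- Let ∅ ≠ A ⊆ Y ⊆ X, where (X,κ) and (Y,κ) are finite connected digital images (Y carrying the induced adjacency) and Y is a κ-retract of X via a retraction r ∈ C(X,κ) (r(X) = Y and r|_Y = id_Y) that is an ε-map. Let h ∈ ℕ be such that every x ∈ X satisfies d_{(X,κ)}(x,y) ≤ h for some y ∈ Y (e.g., h the Hausdorff distance between X and Y with respect to d_{(X,κ)}). Suppose (Y,κ) is (A,m,n)-limited. Then every f ∈ C(X,κ) such that f|_A is an m-map is an (n + 2h + ε)-map; hence (X,κ) is (A, m, n + 2h + ε)-limited. -/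
private lemma cont_dist_le {V : Type*} (G : SimpleGraph V) (hG : G.Connected)
    (f : V → V) (hf : DigContinuous G G f) (u v : V) :
    G.dist (f u) (f v) ≤ G.dist u v := by
  obtain ⟨p, hp⟩ := hG.exists_walk_length_eq_dist u v
  rw [← hp]; clear hp
  induction p with
  | nil => simp
  | @cons a b c hab q ih =>
    have h1 : G.dist (f a) (f b) ≤ 1 := by
      rcases hf a b hab with he | ha
      · simp [he, SimpleGraph.dist_self]
      · exact SimpleGraph.dist_le (SimpleGraph.Walk.cons ha SimpleGraph.Walk.nil)
    calc G.dist (f a) (f c) ≤ G.dist (f a) (f b) + G.dist (f b) (f c) := hG.dist_triangle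
      _ ≤ 1 + q.length := Nat.add_le_add h1 ih
      _ = (SimpleGraph.Walk.cons hab q).length := by simp [Nat.add_comm]

private lemma induce_dist_le {V : Type*} (G : SimpleGraph V) (hG : G.Connected)
    {Y : Set V} (hY : (G.induce Y).Connected)
    (r : V → V) (hr : DigContinuous G G r) (hrange : ∀ x, r x ∈ Y) (u v : V) :
    (G.induce Y).dist ⟨r u, hrange u⟩ ⟨r v, hrange v⟩ ≤ G.dist u v := by
  obtain ⟨p, hp⟩ := hG.exists_walk_length_eq_dist u v
  rw [← hp]; clear hp
  induction p with
  | nil => simp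
  | @cons a b c hab q ih =>
    have h1 : (G.induce Y).dist ⟨r a, hrange a⟩ ⟨r b, hrange b⟩ ≤ 1 := by
      rcases hr a b hab with he | ha
      · have heq : (⟨r a, hrange a⟩ : Y) = ⟨r b, hrange b⟩ := Subtype.ext he
        simp [heq, SimpleGraph.dist_self]
      · have hadj : (G.induce Y).Adj ⟨r a, hrange a⟩ ⟨r b, hrange b⟩ := by simpa using ha
        exact SimpleGraph.dist_le (SimpleGraph.Walk.cons hadj SimpleGraph.Walk.nil)
    calc (G.induce Y).dist ⟨r a, hrange a⟩ ⟨r c, hrange c⟩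
        ≤ (G.induce Y).dist ⟨r a, hrange a⟩ ⟨r b, hrange b⟩
          + (G.induce Y).dist ⟨r b, hrange b⟩ ⟨r c, hrange c⟩ := hY.dist_triangle
      _ ≤ 1 + q.length := Nat.add_le_add h1 ih
      _ = (SimpleGraph.Walk.cons hab q).length := by simp [Nat.add_comm]

private lemma dist_le_induce {V : Type*} (G : SimpleGraph V) (hG : G.Connected)
    {Y : Set V} (hY : (G.induce Y).Connected) (a b : Y) :
    G.dist (a : V) (b : V) ≤ (G.induce Y).dist a b := by
  obtain ⟨p, hp⟩ := hY.exists_walk_length_eq_dist a b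
  rw [← hp]; clear hp
  induction p with
  | nil => simp
  | @cons x y z hxy q ih =>
    have h1 : G.dist (x : V) (y : V) ≤ 1 := by
      have : G.Adj (x : V) (y : V) := by simpa using hxy
      exact SimpleGraph.dist_le (SimpleGraph.Walk.cons this SimpleGraph.Walk.nil)
    calc G.dist (x : V) (z : V) ≤ G.dist (x : V) (y : V) + G.dist (y : V) (z : V) :=
        hG.dist_triangle
      _ ≤ 1 + q.length := Nat.add_le_add h1 ih
      _ = (SimpleGraph.Walk.cons hxy q).length := by simp [Nat.add_comm]

theorem stmt15 {V : Type*} [Fintype V] (G : SimpleGraph V) (hG : G.Connected)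
    (Y : Set V) (hY : (G.induce Y).Connected)
    (A : Set V) (hA : A.Nonempty) (hAY : A ⊆ Y)
    (r : V → V) (hr : DigContinuous G G r)
    (hrX : Set.range r = Y) (hrid : ∀ y ∈ Y, r y = y)
    (ε : ℕ) (hrε : ∀ x : V, G.dist x (r x) ≤ ε)
    (h : ℕ) (hh : ∀ x : V, ∃ y ∈ Y, G.dist x y ≤ h)
    (m n : ℕ)
    (hlim : IsLimiting (G.induce Y) {y : Y | (y : V) ∈ A} m n) :
    (∀ f : V → V, DigContinuous G G f → IsMMapOn G f A m →
      IsMMapOn G f Set.univ (n + 2 * h + ε)) ∧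
    IsLimiting G A m (n + 2 * h + ε) := by
  have hrange : ∀ x, r x ∈ Y := fun x => hrX ▸ Set.mem_range_self x
  have main : ∀ f : V → V, DigContinuous G G f → IsMMapOn G f A m →
      IsMMapOn G f Set.univ (n + 2 * h + ε) := by
    intro f hf hfA
    -- g : Y → Y, g y = r (f y)
    set g : Y → Y := fun y => ⟨r (f (y : V)), hrange _⟩ with hg
    have hrf : DigContinuous G G (fun x => r (f x)) := by
      intro x y hxy
      rcases hf x y hxy with he | ha
      · exact Or.inl (by simp [he])
      · exact hr _ _ ha
    have hgcont : DigContinuous (G.induce Y) (G.induce Y) g := by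
      intro x y hxy
      have : G.Adj (x : V) (y : V) := by simpa using hxy
      rcases hrf (x : V) (y : V) this with he | ha
      · exact Or.inl (Subtype.ext he)
      · exact Or.inr (by simpa using ha)
    have hgA : IsMMapOn (G.induce Y) g {y : Y | (y : V) ∈ A} m := by
      intro a ha
      have haA : (a : V) ∈ A := ha
      have key := induce_dist_le G hG hY r hr hrange (a : V) (f (a : V))
      have hfix : r (a : V) = (a : V) := hrid _ (hAY haA)
      have : (⟨r (a : V), hrange _⟩ : Y) = a := Subtype.ext hfix
      rw [this] at key
      exact key.trans (hfA _ haA)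
    have hgn := hlim g hgcont hgA
    intro x _
    obtain ⟨y, hyY, hxy⟩ := hh x
    have h1 : G.dist y (r (f y)) ≤ n := by
      have := hgn ⟨y, hyY⟩ (Set.mem_univ _)
      have h2 := dist_le_induce G hG hY ⟨y, hyY⟩ (g ⟨y, hyY⟩)
      exact h2.trans this
    have h2 : G.dist (r (f y)) (r (f x)) ≤ h := by
      have := cont_dist_le G hG _ hrf y x
      have hd : G.dist y x ≤ h := by rwa [SimpleGraph.dist_comm]
      exact this.trans hd
    have h3 : G.dist (r (f x)) (f x) ≤ ε := by
      rw [SimpleGraph.dist_comm]; exact hrε (f x)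
    calc G.dist x (f x) ≤ G.dist x y + G.dist y (f x) := hG.dist_triangle
      _ ≤ G.dist x y + (G.dist y (r (f y)) + G.dist (r (f y)) (f x)) :=
          Nat.add_le_add_left hG.dist_triangle _
      _ ≤ G.dist x y + (G.dist y (r (f y)) +
          (G.dist (r (f y)) (r (f x)) + G.dist (r (f x)) (f x))) := by
          exact Nat.add_le_add_left (Nat.add_le_add_left hG.dist_triangle _) _
      _ ≤ h + (n + (h + ε)) := by
          exact Nat.add_le_add hxy (Nat.add_le_add h1 (Nat.add_le_add h2 h3))
      _ = n + 2 * h + ε := by ring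
  exact ⟨main, main⟩
end

section
/- Let m ∈ ℕ, m ≥ 1. The set mℤ = {mk : k ∈ ℤ} is an (m,m)-limiting set for (ℤ, c₁); that is, every c₁-continuous f : ℤ → ℤ such that |f(a) − a| ≤ m for all a ∈ mℤ satisfies |f(x) − x| ≤ m for all x ∈ ℤ. -/
/-- `ℤ` with `c₁`-adjacency. -/
def intC1 : SimpleGraph ℤ where
  Adj x y := |x - y| = 1
  symm := by
    constructor
    intro x y h
    rwa [abs_sub_comm]
  loopless := by
    constructor
    intro x h
    simp at h


/-!
Continuity on `(ℤ, c₁)` gives `f (x + 1) ≤ f x + 1`, so `x ↦ f x - x` is antitone. Every `x`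
lies between two consecutive multiples `a ≤ x ≤ a + m` of `m`, and the bounds
`f a - a ≤ m` and `-m ≤ f (a + m) - (a + m)` squeeze `f x - x`.
-/

lemma intC1_adj_add_one (x : ℤ) : intC1.Adj (x + 1) x := by
  show |x + 1 - x| = 1
  simp

lemma DigContinuous.apply_add_one_le {f : ℤ → ℤ} (hf : DigContinuous intC1 intC1 f) (x : ℤ) :
    f (x + 1) ≤ f x + 1 := by
  rcases hf _ _ (intC1_adj_add_one x) with h | h
  · omega
  · have := (abs_le.mp h.le).2
    omega

lemma DigContinuous.antitone_sub_self {f : ℤ → ℤ} (hf : DigContinuous intC1 intC1 f) :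
    Antitone fun x => f x - x :=
  antitone_int_of_succ_le fun x => by
    have := hf.apply_add_one_le x
    omega

theorem stmt17 (m : ℕ) (hm : 1 ≤ m) (f : ℤ → ℤ)
    (hf : DigContinuous intC1 intC1 f)
    (hA : ∀ a : ℤ, (m : ℤ) ∣ a → |f a - a| ≤ (m : ℤ)) :
    ∀ x : ℤ, |f x - x| ≤ (m : ℤ) := by
  intro x
  have hm0 : (0 : ℤ) < m := by exact_mod_cast hm
  set a : ℤ := m * (x / m)
  have hax : a ≤ x := Int.mul_ediv_self_le hm0.ne'
  have hxa : x ≤ a + m := (Int.lt_mul_ediv_self_add hm0).le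
  have upper := abs_le.mp (hA a (dvd_mul_right _ _))
  have lower := abs_le.mp (hA (a + m) (dvd_add (dvd_mul_right _ _) dvd_rfl))
  exact abs_le.mpr ⟨lower.1.trans (hf.antitone_sub_self hxa),
    (hf.antitone_sub_self hax).trans upper.2⟩
end

section
/- Let X = ℤ^v with c_u-adjacency, 1 ≤ u ≤ v. Then for any m,n ∈ ℕ and any finite nonempty A ⊆ X, (X,c_u) is not (A,m,n)-limited: there exists f ∈ C(X,c_u) such that f|_A is an m-map but f is not an n-map. -/
/-- `ℤ^v` with `c_u`-adjacency: distinct points are adjacent iff each coordinate differs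
by at most 1 and at most `u` coordinates differ. -/
def cuGraph (u v : ℕ) : SimpleGraph (Fin v → ℤ) where
  Adj x y := x ≠ y ∧ (∀ i, |x i - y i| ≤ 1) ∧ {i | x i ≠ y i}.ncard ≤ u
  symm := by
    constructor
    rintro x y ⟨h1, h2, h3⟩
    refine ⟨h1.symm, fun i => by rw [abs_sub_comm]; exact h2 i, ?_⟩
    have : {i | y i ≠ x i} = {i | x i ≠ y i} := Set.ext fun i => ne_comm
    rw [this]
    exact h3
  loopless := by
    constructor
    rintro x ⟨hne, -⟩
    exact hne rfl

/-!
Clamp one coordinate from above at a bound `M` for that coordinate on the finite set `A`,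
`x ↦ x[i ↦ min (x i) M]`. This map is continuous, since `min · M` is 1-Lipschitz and it
changes no other coordinate, and it fixes `A` pointwise. But it moves the point with
`i`-th coordinate `M + n + 1` back to `M`; that coordinate changes by at most one along
each edge, so the move has graph distance `n + 1`.
-/

namespace cuGraph

variable {u v : ℕ}

open Function SimpleGraph

lemma abs_sub_le_one_of_adj {x y : Fin v → ℤ} (h : (cuGraph u v).Adj x y) (i : Fin v) :
    |x i - y i| ≤ 1 :=
  h.2.1 i

lemma natAbs_sub_le_length {x y : Fin v → ℤ} (p : (cuGraph u v).Walk x y) (i : Fin v) :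
    (x i - y i).natAbs ≤ p.length := by
  induction p with
  | nil => simp
  | cons h p ih =>
    have := abs_le.mp (abs_sub_le_one_of_adj h i)
    rw [Walk.length_cons]
    omega

lemma natAbs_sub_le_dist {x y : Fin v → ℤ} (h : (cuGraph u v).Reachable x y) (i : Fin v) :
    (x i - y i).natAbs ≤ (cuGraph u v).dist x y := by
  obtain ⟨p, hp⟩ := h.exists_walk_length_eq_dist
  exact hp ▸ natAbs_sub_le_length p i

lemma adj_update_add_one (hu : 1 ≤ u) (x : Fin v → ℤ) (i : Fin v) (t : ℤ) :
    (cuGraph u v).Adj (update x i t) (update x i (t + 1)) := by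
  refine ⟨fun h => by simpa using congrFun h i, fun j => ?_, ?_⟩
  · rcases eq_or_ne j i with rfl | hj
    · simp
    · simp [update_of_ne hj]
  · have hsub : {j | update x i t j ≠ update x i (t + 1) j} ⊆ {i} := by
      intro j hj
      by_contra hji
      exact hj (by simp [update_of_ne hji])
    calc _ ≤ ({i} : Set (Fin v)).ncard := Set.ncard_le_ncard hsub
      _ = 1 := Set.ncard_singleton i
      _ ≤ u := hu

lemma reachable_update_add (hu : 1 ≤ u) (x : Fin v → ℤ) (i : Fin v) (t : ℤ) (k : ℕ) :
    (cuGraph u v).Reachable (update x i t) (update x i (t + k)) := by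
  induction k with
  | zero => simp
  | succ k ih =>
    refine ih.trans (Adj.reachable ?_)
    simpa [add_assoc] using adj_update_add_one hu x i (t + k)

lemma digContinuous_update_comp {g : ℤ → ℤ} (hg : ∀ a b, |a - b| ≤ 1 → |g a - g b| ≤ 1)
    (i : Fin v) :
    DigContinuous (cuGraph u v) (cuGraph u v) fun x => update x i (g (x i)) := by
  rintro x y ⟨-, hcoord, hcard⟩
  by_cases heq : update x i (g (x i)) = update y i (g (y i))
  · exact Or.inl heq
  refine Or.inr ⟨heq, fun j => ?_, ?_⟩
  · rcases eq_or_ne j i with rfl | hj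
    · simpa using hg _ _ (hcoord j)
    · simpa [update_of_ne hj] using hcoord j
  · have hsub : {j | update x i (g (x i)) j ≠ update y i (g (y i)) j} ⊆ {j | x j ≠ y j} := by
      intro j hj hxy
      rcases eq_or_ne j i with rfl | hji
      · exact hj (by simp [hxy])
      · exact hj (by simp [update_of_ne hji, hxy])
    exact (Set.ncard_le_ncard hsub).trans hcard

lemma digContinuous_update_min (i : Fin v) (M : ℤ) :
    DigContinuous (cuGraph u v) (cuGraph u v) fun x => update x i (min (x i) M) :=
  digContinuous_update_comp
    (fun a b hab => (abs_min_sub_min_le_max a M b M).trans (by simpa using hab)) i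

lemma not_isMMapOn_update_min (hu : 1 ≤ u) (i : Fin v) (M : ℤ) (n : ℕ) :
    ¬ IsMMapOn (cuGraph u v) (fun x => update x i (min (x i) M)) Set.univ n := by
  let x : Fin v → ℤ := update 0 i (M + (n + 1 : ℕ))
  have hx : update x i (min (x i) M) = update (0 : Fin v → ℤ) i M := by
    simp only [x, update_idem, update_self]
    rw [min_eq_right (by omega)]
  have hreach : (cuGraph u v).Reachable x (update (0 : Fin v → ℤ) i M) :=
    (reachable_update_add hu 0 i M (n + 1)).symm
  have hgap : (x i - update (0 : Fin v → ℤ) i M i).natAbs = n + 1 := by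
    simp only [x, update_self]
    omega
  intro h
  have hle : (cuGraph u v).dist x (update (0 : Fin v → ℤ) i M) ≤ n := hx ▸ h x trivial
  have := natAbs_sub_le_dist hreach i
  omega

end cuGraph

open Function cuGraph in
theorem stmt18_general (u v : ℕ) (hu : 1 ≤ u) (huv : u ≤ v) (m n : ℕ)
    (A : Set (Fin v → ℤ)) (hfin : A.Finite) :
    ¬ IsLimiting (cuGraph u v) A m n ∧
    ∃ f : (Fin v → ℤ) → (Fin v → ℤ),
      DigContinuous (cuGraph u v) (cuGraph u v) f ∧
      IsMMapOn (cuGraph u v) f A m ∧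
      ¬ IsMMapOn (cuGraph u v) f Set.univ n := by
  let i : Fin v := ⟨0, by omega⟩
  obtain ⟨M, hM⟩ := (hfin.image (· i)).bddAbove
  let f : (Fin v → ℤ) → (Fin v → ℤ) := fun x => update x i (min (x i) M)
  have hcont : DigContinuous (cuGraph u v) (cuGraph u v) f := digContinuous_update_min i M
  have hmmap : IsMMapOn (cuGraph u v) f A m := by
    intro a ha
    have hfa : f a = a := by simp [f, hM ⟨a, ha, rfl⟩]
    simp [hfa]
  have hnot := not_isMMapOn_update_min hu i M n
  exact ⟨fun hl => hnot (hl f hcont hmmap), f, hcont, hmmap, hnot⟩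

theorem stmt18 (u v : ℕ) (hu : 1 ≤ u) (huv : u ≤ v) (m n : ℕ)
    (A : Set (Fin v → ℤ)) (hfin : A.Finite) (hne : A.Nonempty) :
    ¬ IsLimiting (cuGraph u v) A m n ∧
    ∃ f : (Fin v → ℤ) → (Fin v → ℤ),
      DigContinuous (cuGraph u v) (cuGraph u v) f ∧
      IsMMapOn (cuGraph u v) f A m ∧
      ¬ IsMMapOn (cuGraph u v) f Set.univ n :=
  stmt18_general u v hu huv m n A hfin
end

section
/- Let X = [0,2]_ℤ × [0,2]_ℤ with c₂-adjacency and let A = {(0,0),(0,2),(2,0),(2,2)}. Then (X,c₂) is not (A,1,1)-limited: the function f : X → X defined by f(x,y) = (x,y) if y > 0, f(0,0) = (0,1), f(2,0) = (2,1), f(1,0) = (1,2), is c₂-continuous with f|_A a 1-map, but f is not a 1-map. -/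
/-- The digital square `[0,2]_ℤ × [0,2]_ℤ` with `c₂`-adjacency. -/
def sqC2 : SimpleGraph (Set.Icc (0 : ℤ) 2 ×ˢ Set.Icc (0 : ℤ) 2) where
  Adj p q := p ≠ q ∧ |(p : ℤ × ℤ).1 - (q : ℤ × ℤ).1| ≤ 1 ∧
    |(p : ℤ × ℤ).2 - (q : ℤ × ℤ).2| ≤ 1
  symm := by
    constructor
    rintro p q ⟨h1, h2, h3⟩
    exact ⟨h1.symm, by rwa [abs_sub_comm], by rwa [abs_sub_comm]⟩
  loopless := by
    constructor
    rintro p ⟨hne, -⟩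
    exact hne rfl

/-- The set of corners of `[0,2]_ℤ × [0,2]_ℤ`. -/
def cornerSet : Set (Set.Icc (0 : ℤ) 2 ×ˢ Set.Icc (0 : ℤ) 2) :=
  {p | (p : ℤ × ℤ) = (0, 0) ∨ (p : ℤ × ℤ) = (0, 2) ∨
       (p : ℤ × ℤ) = (2, 0) ∨ (p : ℤ × ℤ) = (2, 2)}

/-- The map of Example `A(0,1)notA(1,1)`: identity on points with `y > 0`,
`(0,0) ↦ (0,1)`, `(2,0) ↦ (2,1)`, `(1,0) ↦ (1,2)`. -/
def f19 : (Set.Icc (0 : ℤ) 2 ×ˢ Set.Icc (0 : ℤ) 2) →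
    (Set.Icc (0 : ℤ) 2 ×ˢ Set.Icc (0 : ℤ) 2) := fun p =>
  if (p : ℤ × ℤ).2 = 0 then
    (if (p : ℤ × ℤ).1 = 1 then ⟨(1, 2), by constructor <;> norm_num⟩
     else ⟨((p : ℤ × ℤ).1, 1), ⟨p.2.1, by norm_num⟩⟩)
  else p


/-! `f19` preserves first coordinates, and whenever one of two adjacent points lies in the bottom
row both images lie in rows 1 and 2; so images of adjacent points are equal or adjacent. -/

theorem not_isLimiting_of_isMMapOn {V : Type*} {G : SimpleGraph V} {A : Set V} {m n : ℕ}
    {f : V → V} (hf : DigContinuous G G f) (hA : IsMMapOn G f A m)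
    (hn : ¬ IsMMapOn G f Set.univ n) : ¬ IsLimiting G A m n :=
  fun hlim => hn (hlim f hf hA)

theorem SimpleGraph.Reachable.dist_le_one_iff {V : Type*} {G : SimpleGraph V} {u v : V}
    (h : G.Reachable u v) : G.dist u v ≤ 1 ↔ G.Adj u v ∨ u = v := by
  rw [← ENat.natCast_le_natCast, h.coe_dist_eq_edist]
  exact SimpleGraph.edist_le_one_iff_adj_or_eq

theorem isMMapOn_one_of_adj_or_eq {V : Type*} {G : SimpleGraph V} {f : V → V} {A : Set V}
    (h : ∀ a ∈ A, G.Adj a (f a) ∨ a = f a) : IsMMapOn G f A 1 := fun a ha =>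
  have hr : G.Reachable a (f a) := (h a ha).elim SimpleGraph.Adj.reachable (· ▸ .refl a)
  hr.dist_le_one_iff.mpr (h a ha)

abbrev Square := ↥(Set.Icc (0 : ℤ) 2 ×ˢ Set.Icc (0 : ℤ) 2)

theorem sqC2_adj_iff (p q : Square) : sqC2.Adj p q ↔
    ¬((p : ℤ × ℤ).1 = (q : ℤ × ℤ).1 ∧ (p : ℤ × ℤ).2 = (q : ℤ × ℤ).2) ∧
    |(p : ℤ × ℤ).1 - (q : ℤ × ℤ).1| ≤ 1 ∧ |(p : ℤ × ℤ).2 - (q : ℤ × ℤ).2| ≤ 1 := by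
  show (p ≠ q ∧ _) ↔ _
  rw [Ne, Subtype.ext_iff, Prod.ext_iff]

theorem digContinuous_f19 : DigContinuous sqC2 sqC2 f19 := by
  intro p q hpq
  rw [sqC2_adj_iff, abs_le, abs_le] at hpq
  obtain ⟨⟨hp1, hp2⟩, hp3, hp4⟩ := p.2
  obtain ⟨⟨hq1, hq2⟩, hq3, hq4⟩ := q.2
  unfold f19
  split_ifs <;> simp only [sqC2_adj_iff, Subtype.ext_iff, Prod.ext_iff, abs_le] <;> omega

theorem isMMapOn_f19_cornerSet : IsMMapOn sqC2 f19 cornerSet 1 := by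
  refine isMMapOn_one_of_adj_or_eq fun p hp => ?_
  simp only [cornerSet, Set.mem_ofPred_eq, Prod.ext_iff] at hp
  unfold f19
  split_ifs <;>
    simp only [sqC2_adj_iff, Subtype.ext_iff, Prod.ext_iff, abs_le, true_and, or_true] <;> omega

theorem not_isMMapOn_f19 : ¬ IsMMapOn sqC2 f19 Set.univ 1 := by
  let p10 : Square := ⟨(1, 0), by norm_num⟩
  let p11 : Square := ⟨(1, 1), by norm_num⟩
  have hf : f19 p10 = ⟨(1, 2), by norm_num⟩ := rfl
  have hr : sqC2.Reachable p10 (f19 p10) := by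
    rw [hf]
    refine (SimpleGraph.Adj.reachable (v := p11) ?_).trans (SimpleGraph.Adj.reachable ?_) <;>
      norm_num [sqC2_adj_iff, p10, p11]
  intro h
  have hnear := hr.dist_le_one_iff.mp (h p10 trivial)
  rw [hf, sqC2_adj_iff, Subtype.ext_iff] at hnear
  norm_num [p10] at hnear

theorem stmt19 :
    ¬ IsLimiting sqC2 cornerSet 1 1 ∧
    DigContinuous sqC2 sqC2 f19 ∧
    IsMMapOn sqC2 f19 cornerSet 1 ∧
    ¬ IsMMapOn sqC2 f19 Set.univ 1 :=
  ⟨not_isLimiting_of_isMMapOn digContinuous_f19 isMMapOn_f19_cornerSet not_isMMapOn_f19,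
    digContinuous_f19, isMMapOn_f19_cornerSet, not_isMMapOn_f19⟩
end
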